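/- Let (x, ξ) ∈ ℝⁿ × ℝⁿ satisfy 𝔤_{(x,ξ)} = {0}. Then the kernel (radical) of the second derivative bilinear form of ψ at the point (x, ξ, 0) equals (ker dJ(x,ξ)) × {0} ⊆ (ℝⁿ × ℝⁿ) × 𝔤, where dJ(x,ξ)(u,η)(B) = ⟨Bu, ξ⟩ + ⟨Bx, η⟩. Consequently, the restriction of this second derivative bilinear form to any linear complement of (ker dJ(x,ξ)) × {0} in ℝⁿ × ℝⁿ × 𝔤 is nondegenerate (the transversal Hessian of ψ along the regular part of its critical set is nondegenerate at such points). -/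

import Mathlib

/-!
`ψ` is the diagonal `z ↦ T z z z` of the trilinear form `T a b c = ⟨X_c x_a, ξ_b⟩`, so its Hessian
at `(x, ξ, 0)` is the symmetrisation of `T` with one slot fixed at `(x, ξ, 0)`:
`H((u, η, A), (v, ζ, B)) = ⟨Av, ξ⟩ + ⟨Bu, ξ⟩ + ⟨Ax, ζ⟩ + ⟨Bx, η⟩`.
If `(u, η, A)` lies in the radical, testing against `(Aξ, 0, 0)` and `(0, Ax, 0)` gives
`|Aξ|² = |Ax|² = 0` (skew-symmetry turns `⟨A²ξ, ξ⟩` into `-|Aξ|²`), so `A` is in the isotropy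
algebra and vanishes; testing against `(0, 0, B)` then leaves exactly `dJ(x, ξ)(u, η)(B) = 0`.
Nondegeneracy on a complement of the radical holds for any symmetric bilinear form.
-/

namespace ContinuousLinearMap

variable {𝕜 E F : Type*} [NontriviallyNormedField 𝕜] [NormedAddCommGroup E] [NormedSpace 𝕜 E]
  [NormedAddCommGroup F] [NormedSpace 𝕜 F]

theorem hasFDerivAt_apply_self (B : E →L[𝕜] E →L[𝕜] F) (p : E) :
    HasFDerivAt (fun z => B z z) (B p + B.flip p) p := by
  refine (B.hasFDerivAt_of_bilinear (hasFDerivAt_id p) (hasFDerivAt_id p)).congr_fderiv ?_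
  ext q
  simp

theorem fderiv_apply_self (B : E →L[𝕜] E →L[𝕜] F) :
    fderiv 𝕜 (fun z => B z z) = fun p => B p + B.flip p :=
  funext fun p => (B.hasFDerivAt_apply_self p).fderiv

noncomputable def cubicDeriv (T : E →L[𝕜] E →L[𝕜] E →L[𝕜] F) : E →L[𝕜] E →L[𝕜] E →L[𝕜] F :=
  (flipₗᵢ 𝕜 E E F : (E →L[𝕜] E →L[𝕜] F) →L[𝕜] _).comp T.flip +
    (flipₗᵢ 𝕜 E E F : (E →L[𝕜] E →L[𝕜] F) →L[𝕜] _).comp T + T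

@[simp] theorem cubicDeriv_apply (T : E →L[𝕜] E →L[𝕜] E →L[𝕜] F) (a b q : E) :
    cubicDeriv T a b q = T q a b + T a q b + T a b q := by
  simp [cubicDeriv]

theorem hasFDerivAt_apply_self_self (T : E →L[𝕜] E →L[𝕜] E →L[𝕜] F) (p : E) :
    HasFDerivAt (fun z => T z z z) (cubicDeriv T p p) p := by
  refine ((T.hasFDerivAt_apply_self p).clm_apply (hasFDerivAt_id p)).congr_fderiv ?_
  ext q
  simp only [comp_id, flip_add, id_eq, add_apply, flip_apply, cubicDeriv_apply]
  abel

theorem fderiv_fderiv_apply_self_self (T : E →L[𝕜] E →L[𝕜] E →L[𝕜] F) (p u v : E) :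
    fderiv 𝕜 (fderiv 𝕜 fun z => T z z z) p u v =
      T v p u + T p v u + T p u v + T v u p + T u v p + T u p v := by
  have : fderiv 𝕜 (fun z => T z z z) = fun z => cubicDeriv T z z :=
    funext fun z => (T.hasFDerivAt_apply_self_self z).fderiv
  rw [this, (cubicDeriv T).fderiv_apply_self]
  simp only [add_apply, flip_apply, cubicDeriv_apply]
  abel

end ContinuousLinearMap

theorem LinearMap.IsRefl.disjoint_orthogonalBilin_of_isCompl_ker {R M M₁ : Type*} [CommRing R]
    [AddCommGroup M] [Module R M] [AddCommGroup M₁] [Module R M₁] {B : M →ₗ[R] M →ₗ[R] M₁}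
    (hB : B.IsRefl) {W : Submodule R M} (hW : IsCompl (LinearMap.ker B) W) :
    Disjoint W (W.orthogonalBilin B) := by
  refine Submodule.disjoint_def.2 fun w hw hw' => Submodule.disjoint_def.1 hW.disjoint w ?_ hw
  refine LinearMap.ext fun q => ?_
  obtain ⟨k, u, hk, hu, rfl⟩ := Submodule.codisjoint_iff_exists_add_eq.1 hW.codisjoint q
  have hwk : B w k = 0 := hB.eq_zero (LinearMap.congr_fun (LinearMap.mem_ker.1 hk) w)
  have hwu : B w u = 0 := hB.eq_zero (hw' u hu)
  simp [hwk, hwu]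

open Matrix

theorem Matrix.mulVec_dotProduct_of_transpose_eq_neg {ι R : Type*} [Fintype ι] [CommRing R]
    {A : Matrix ι ι R} (hA : Aᵀ = -A) (v w : ι → R) :
    (A *ᵥ v) ⬝ᵥ w = -((A *ᵥ w) ⬝ᵥ v) := by
  rw [dotProduct_comm, dotProduct_mulVec, ← mulVec_transpose, hA, neg_mulVec, neg_dotProduct]

section PhaseFunction

/- `𝔤` enters through a linear map `ρ` from an abstract normed space rather than as a submodule of
matrices, so that no norm on matrices (which is not an instance) is needed here. -/

variable {ι G : Type*} [Fintype ι] [NormedAddCommGroup G] [NormedSpace ℝ G]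
  (ρ : G →ₗ[ℝ] Matrix ι ι ℝ)

local notation "V" => (ι → ℝ) × (ι → ℝ) × G

noncomputable def phaseForm [FiniteDimensional ℝ G] : V →L[ℝ] V →L[ℝ] V →L[ℝ] ℝ :=
  LinearMap.toContinuousLinearMap <| LinearMap.toContinuousLinearMap.toLinearMap ∘ₗ
    LinearMap.mk₂ ℝ (fun a b => LinearMap.toContinuousLinearMap
      { toFun := fun c : V => (ρ c.2.2 *ᵥ a.1) ⬝ᵥ b.2.1
        map_add' := fun c d => by simp [add_mulVec]
        map_smul' := fun r c => by simp [smul_mulVec] })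
      (fun a a' b => ContinuousLinearMap.ext fun c => by simp [mulVec_add])
      (fun r a b => ContinuousLinearMap.ext fun c => by simp [mulVec_smul])
      (fun a b b' => ContinuousLinearMap.ext fun c => by simp)
      (fun r a b => ContinuousLinearMap.ext fun c => by simp)

@[simp] theorem phaseForm_apply [FiniteDimensional ℝ G] (a b c : V) :
    phaseForm ρ a b c = (ρ c.2.2 *ᵥ a.1) ⬝ᵥ b.2.1 := rfl

def phaseHessian (x ξ : ι → ℝ) (p q : V) : ℝ :=
  (ρ p.2.2 *ᵥ q.1) ⬝ᵥ ξ + (ρ q.2.2 *ᵥ p.1) ⬝ᵥ ξ + (ρ p.2.2 *ᵥ x) ⬝ᵥ q.2.1 +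
    (ρ q.2.2 *ᵥ x) ⬝ᵥ p.2.1

theorem fderiv_fderiv_phaseForm [FiniteDimensional ℝ G] (x ξ : ι → ℝ) (p q : V) :
    fderiv ℝ (fderiv ℝ fun z => phaseForm ρ z z z) (x, ξ, 0) p q = phaseHessian ρ x ξ p q := by
  rw [ContinuousLinearMap.fderiv_fderiv_apply_self_self]
  simp only [phaseForm_apply, map_zero, zero_mulVec, zero_dotProduct, add_zero, phaseHessian]
  ring

theorem phaseHessian_comm (x ξ : ι → ℝ) (p q : V) :
    phaseHessian ρ x ξ p q = phaseHessian ρ x ξ q p := by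
  simp only [phaseHessian]
  ring

theorem forall_phaseHessian_eq_zero_iff {x ξ : ι → ℝ} (hskew : ∀ X, (ρ X)ᵀ = -ρ X)
    (hiso : ∀ X, ρ X *ᵥ x = 0 → ρ X *ᵥ ξ = 0 → X = 0) (p : V) :
    (∀ q, phaseHessian ρ x ξ p q = 0) ↔
      (∀ X, (ρ X *ᵥ p.1) ⬝ᵥ ξ + (ρ X *ᵥ x) ⬝ᵥ p.2.1 = 0) ∧ p.2.2 = 0 := by
  obtain ⟨u, η, X⟩ := p
  constructor
  · intro hp
    have hξ : ρ X *ᵥ ξ = 0 := by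
      have h := hp (ρ X *ᵥ ξ, 0, 0)
      simp only [phaseHessian, map_zero, zero_mulVec, zero_dotProduct, dotProduct_zero,
        add_zero, mulVec_dotProduct_of_transpose_eq_neg (hskew X) (ρ X *ᵥ ξ)] at h
      simpa using h
    have hx : ρ X *ᵥ x = 0 := by
      have h := hp (0, ρ X *ᵥ x, 0)
      simpa [phaseHessian] using h
    obtain rfl : X = 0 := hiso X hx hξ
    refine ⟨fun Y => ?_, rfl⟩
    simpa [phaseHessian] using hp (0, 0, Y)
  · rintro ⟨hJ, rfl⟩ q
    simpa [phaseHessian] using hJ q.2.2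

end PhaseFunction

attribute [local instance] Matrix.normedAddCommGroup Matrix.normedSpace

/-- If `(x, ξ)` has trivial isotropy algebra, then the kernel (radical) of
the second derivative bilinear form of `ψ` at `(x, ξ, 0)` equals `(ker dJ(x,ξ)) × {0}`,
where `dJ(x,ξ)(u,η)(B) = ⟨Bu, ξ⟩ + ⟨Bx, η⟩`. Consequently, the restriction of this bilinear
form to any linear complement `W` of `(ker dJ(x,ξ)) × {0}` in `ℝⁿ × ℝⁿ × 𝔤` is
nondegenerate. -/
theorem statement5 (n : ℕ) (𝔤 : Submodule ℝ (Matrix (Fin n) (Fin n) ℝ))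
    (h𝔤 : ∀ A ∈ 𝔤, Aᵀ = -A)
    (ψ : (Fin n → ℝ) × (Fin n → ℝ) × ↥𝔤 → ℝ)
    (hψ : ∀ (x ξ : Fin n → ℝ) (X : ↥𝔤), ψ (x, ξ, X) = (X.val *ᵥ x) ⬝ᵥ ξ)
    (x ξ : Fin n → ℝ)
    (hiso : ∀ X : ↥𝔤, X.val *ᵥ x = 0 → X.val *ᵥ ξ = 0 → X = 0) :
    {p : (Fin n → ℝ) × (Fin n → ℝ) × ↥𝔤 |
        ∀ q : (Fin n → ℝ) × (Fin n → ℝ) × ↥𝔤,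
          fderiv ℝ (fderiv ℝ ψ) (x, ξ, (0 : ↥𝔤)) p q = 0} =
      {p : (Fin n → ℝ) × (Fin n → ℝ) × ↥𝔤 |
        (∀ B ∈ 𝔤, (B *ᵥ p.1) ⬝ᵥ ξ + (B *ᵥ x) ⬝ᵥ p.2.1 = 0) ∧ p.2.2 = 0} ∧
    ∀ W : Submodule ℝ ((Fin n → ℝ) × (Fin n → ℝ) × ↥𝔤),
      (∀ p : (Fin n → ℝ) × (Fin n → ℝ) × ↥𝔤,
          ((∀ B ∈ 𝔤, (B *ᵥ p.1) ⬝ᵥ ξ + (B *ᵥ x) ⬝ᵥ p.2.1 = 0) ∧ p.2.2 = 0) → p ∈ W → p = 0) →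
      (∀ p : (Fin n → ℝ) × (Fin n → ℝ) × ↥𝔤,
          ∃ k, ((∀ B ∈ 𝔤, (B *ᵥ k.1) ⬝ᵥ ξ + (B *ᵥ x) ⬝ᵥ k.2.1 = 0) ∧ k.2.2 = 0) ∧
            ∃ w ∈ W, p = k + w) →
      ∀ w ∈ W, (∀ u ∈ W, fderiv ℝ (fderiv ℝ ψ) (x, ξ, (0 : ↥𝔤)) u w = 0) → w = 0 := by
  set H := fderiv ℝ (fderiv ℝ ψ) (x, ξ, (0 : ↥𝔤))
  have hH : ∀ p q, H p q = phaseHessian 𝔤.subtype x ξ p q := by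
    obtain rfl : ψ = fun z => phaseForm 𝔤.subtype z z z := funext fun z => hψ z.1 z.2.1 z.2.2
    exact fderiv_fderiv_phaseForm 𝔤.subtype x ξ
  have hker : ∀ p, p ∈ LinearMap.ker H.toLinearMap₁₂ ↔
      (∀ B ∈ 𝔤, (B *ᵥ p.1) ⬝ᵥ ξ + (B *ᵥ x) ⬝ᵥ p.2.1 = 0) ∧ p.2.2 = 0 := by
    intro p
    rw [LinearMap.mem_ker, LinearMap.ext_iff]
    simpa [hH, Subtype.forall] using
      forall_phaseHessian_eq_zero_iff 𝔤.subtype (fun X => h𝔤 X X.2) hiso p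
  refine ⟨Set.ext fun p => by simpa [LinearMap.ext_iff] using hker p, fun W hdisj hcodisj => ?_⟩
  have hrefl : H.toLinearMap₁₂.IsRefl := fun p q h => by
    simpa [hH, phaseHessian_comm _ _ _ q] using h
  have hcompl : IsCompl (LinearMap.ker H.toLinearMap₁₂) W := by
    refine ⟨Submodule.disjoint_def.2 fun p hp hpW => hdisj p ((hker p).1 hp) hpW,
      Submodule.codisjoint_iff_exists_add_eq.2 fun p => ?_⟩
    obtain ⟨k, hk, w, hw, rfl⟩ := hcodisj p
    exact ⟨k, w, (hker k).2 hk, hw, rfl⟩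
  exact fun w hw hwW => Submodule.disjoint_def.1
    (hrefl.disjoint_orthogonalBilin_of_isCompl_ker hcompl) w hw hwW
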